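/- Let G, H, H' be simple graphs on the same vertex set with E(G) ⊆ E(H) ⊆ E(H'), and let A ∈ S(G) have the strong spectral property with respect to H. Then for every ε > 0 there exists a matrix A' ∈ S^cl(H') such that: A' has the same multiset of eigenvalues as A; ‖A − A'‖ < ε; A' has the strong spectral property with respect to H'; and every entry of A' corresponding to an edge in E(H') \ E(H) is nonzero. -/

import Mathlib

attribute [local instance] Matrix.normedAddCommGroup

/-- `S(G)`: real symmetric matrices whose off-diagonal zero–nonzero pattern is given by `G`. -/
def inS {V : Type*} (G : SimpleGraph V) (A : Matrix V V ℝ) : Prop :=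
  A.IsSymm ∧ ∀ i j : V, i ≠ j → (A i j ≠ 0 ↔ G.Adj i j)

/-- The spectrum of a matrix as a multiset (roots of the characteristic polynomial,
counted with multiplicity).  For real symmetric matrices this is the multiset of
eigenvalues counted with multiplicity. -/
noncomputable def specM {V : Type*} [Fintype V] [DecidableEq V] (A : Matrix V V ℝ) :
    Multiset ℝ :=
  A.charpoly.roots

/-- The strong spectral property: the only symmetric `X` with `A∘X = O`, `I∘X = O`
and `AX - XA = O` is `X = O`. -/
def HasSSP {V : Type*} [Fintype V] (A : Matrix V V ℝ) : Prop :=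
  ∀ X : Matrix V V ℝ, X.IsSymm → (∀ i j, A i j * X i j = 0) →
    (∀ i, X i i = 0) → A * X = X * A → X = 0

/-- `S^cl(H)`: real symmetric matrices whose off-diagonal entries are nonzero only on
edges of `H`. -/
def inScl {V : Type*} (H : SimpleGraph V) (A : Matrix V V ℝ) : Prop :=
  A.IsSymm ∧ ∀ i j : V, i ≠ j → A i j ≠ 0 → H.Adj i j

/-- The strong spectral property with respect to a supergraph `H`: the only symmetric `X`
with `X ∈ S^cl(Hᶜ)` (i.e. `X` vanishing on the edges of `H`), `I∘X = O` and
`AX - XA = O` is `X = O`. -/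
def HasSSPwrt {V : Type*} [Fintype V] (H : SimpleGraph V) (A : Matrix V V ℝ) : Prop :=
  ∀ X : Matrix V V ℝ, X.IsSymm → (∀ i j, H.Adj i j → X i j = 0) →
    (∀ i, X i i = 0) → A * X = X * A → X = 0

/-!
Conjugating `A` by `exp K` with `K` skew-symmetric preserves the spectrum and symmetry. Project
`exp K * A * exp (-K)` onto the symmetric matrices supported on the non-edges of `H`; the
resulting map sends `K = 0` to `0`, since `A` vanishes off `H`, and has derivative
`K ↦ proj (K * A - A * K)` there. By the trace identity `tr (X (K A - A K)) = tr ((X A - A X) K)`,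
a matrix of the target space that is Frobenius-orthogonal to this range commutes with `A`, so the
SSP with respect to `H` makes the derivative surjective. The map is then open at `0`: every small
target, in particular `c • adj (H' \ H)` with `c ≠ 0`, is the projection of some conjugate `A'`
arbitrarily close to `A`. Finally, `A` also has the SSP with respect to `H'`, an open condition,
so `A'` keeps it.
-/

open Matrix Filter Topology NormedSpace

section NonEdges

variable {n : Type*}

def symmOnNonEdges (H : SimpleGraph n) : Submodule ℝ (Matrix n n ℝ) where
  carrier := {X | X.IsSymm ∧ (∀ i j, H.Adj i j → X i j = 0) ∧ ∀ i, X i i = 0}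
  add_mem' := by
    rintro X Y ⟨hXs, hXH, hXd⟩ ⟨hYs, hYH, hYd⟩
    exact ⟨hXs.add hYs, fun i j h => by simp [hXH i j h, hYH i j h], fun i => by simp [hXd, hYd]⟩
  zero_mem' := ⟨isSymm_zero, fun _ _ _ => rfl, fun _ => rfl⟩
  smul_mem' := by
    rintro c X ⟨hXs, hXH, hXd⟩
    exact ⟨hXs.smul c, fun i j h => by simp [hXH i j h], fun i => by simp [hXd]⟩

theorem adjMatrix_mem_symmOnNonEdges {H K : SimpleGraph n} [DecidableRel K.Adj] (hK : K ≤ Hᶜ) :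
    K.adjMatrix ℝ ∈ symmOnNonEdges H :=
  ⟨K.isSymm_adjMatrix, fun i j hij => by simp [show ¬K.Adj i j from fun h => (hK h).2 hij],
    fun i => by simp⟩

theorem inS.inScl_of_le {G H : SimpleGraph n} {A : Matrix n n ℝ} (hA : inS G A) (hGH : G ≤ H) :
    inScl H A :=
  ⟨hA.1, fun i j hij hAij => hGH ((hA.2 i j hij).1 hAij)⟩

variable [DecidableEq n]

theorem adjMatrix_compl_hadamard_of_mem {H : SimpleGraph n} [DecidableRel H.Adj]
    {X : Matrix n n ℝ} (hX : X ∈ symmOnNonEdges H) : Hᶜ.adjMatrix ℝ ⊙ X = X := by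
  ext i j
  by_cases hij : Hᶜ.Adj i j
  · simp [hij]
  · rw [SimpleGraph.compl_adj, not_and_or, not_ne_iff, not_not] at hij
    rcases hij with rfl | hij
    · simp [hX.2.2]
    · simp [hX.2.1 i j hij]

-- The Frobenius-orthogonal projection onto `symmOnNonEdges H` (see `frobeniusForm_nonEdgeProj`).
noncomputable def nonEdgeProj (H : SimpleGraph n) [DecidableRel H.Adj] :
    Matrix n n ℝ →ₗ[ℝ] symmOnNonEdges H where
  toFun Y := ⟨(1 / 2 : ℝ) • (Hᶜ.adjMatrix ℝ ⊙ (Y + Yᵀ)), by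
    refine ⟨?_, fun i j hij => by simp [hij], fun i => by simp⟩
    simp [IsSymm, transpose_hadamard, add_comm]⟩
  map_add' Y Y' := by
    ext : 1
    simp only [transpose_add, Submodule.coe_add, ← smul_add, ← hadamard_add]
    abel_nf
  map_smul' c Y := by
    ext : 1
    simp only [transpose_smul, ← smul_add, hadamard_smul, Submodule.coe_smul, RingHom.id_apply,
      smul_comm c]

theorem nonEdgeProj_apply (H : SimpleGraph n) [DecidableRel H.Adj] (Y : Matrix n n ℝ) (i j : n) :
    (nonEdgeProj H Y : Matrix n n ℝ) i j = if Hᶜ.Adj i j then (Y i j + Y j i) / 2 else 0 := by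
  change (1 / 2 : ℝ) * (Hᶜ.adjMatrix ℝ i j * (Y i j + Y j i)) = _
  rw [SimpleGraph.adjMatrix_apply]
  split_ifs <;> ring

theorem nonEdgeProj_apply_of_isSymm {H : SimpleGraph n} [DecidableRel H.Adj] {Y : Matrix n n ℝ}
    (hY : Y.IsSymm) {i j : n} (hij : Hᶜ.Adj i j) :
    (nonEdgeProj H Y : Matrix n n ℝ) i j = Y i j := by
  rw [nonEdgeProj_apply, if_pos hij, hY.apply i j, add_self_div_two]

theorem nonEdgeProj_eq_zero_of_inScl {H : SimpleGraph n} [DecidableRel H.Adj] {Y : Matrix n n ℝ}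
    (hY : inScl H Y) : nonEdgeProj H Y = 0 := by
  ext i j
  by_cases hij : Hᶜ.Adj i j
  · rw [nonEdgeProj_apply_of_isSymm hY.1 hij]
    exact by_contra fun hY0 => hij.2 (hY.2 i j hij.1 hY0)
  · rw [nonEdgeProj_apply, if_neg hij]
    rfl

end NonEdges

section Frobenius

variable {n : Type*} [Fintype n]

def frobeniusForm : LinearMap.BilinForm ℝ (Matrix n n ℝ) :=
  LinearMap.mk₂ ℝ (fun X Y => (X * Yᵀ).trace)
    (fun X X' Y => by simp [Matrix.add_mul, trace_add])
    (fun c X Y => by simp)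
    (fun X Y Y' => by simp [Matrix.mul_add, trace_add])
    (fun c X Y => by simp)

theorem frobeniusForm_apply (X Y : Matrix n n ℝ) : frobeniusForm X Y = (X * Yᵀ).trace := rfl

theorem frobeniusForm_self_eq_zero_iff {X : Matrix n n ℝ} : frobeniusForm X X = 0 ↔ X = 0 := by
  rw [frobeniusForm_apply, ← conjTranspose_eq_transpose_of_trivial,
    trace_mul_conjTranspose_self_eq_zero_iff]

theorem frobeniusForm_transpose (X Y : Matrix n n ℝ) :
    frobeniusForm Xᵀ Y = frobeniusForm X Yᵀ := by
  simp only [frobeniusForm_apply, trace_transpose_mul, transpose_transpose]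

theorem frobeniusForm_hadamard (M X Y : Matrix n n ℝ) :
    frobeniusForm X (M ⊙ Y) = frobeniusForm (M ⊙ X) Y := by
  simp only [frobeniusForm_apply, ← sum_hadamard_eq, ← hadamard_assoc, hadamard_comm X M]

theorem frobeniusForm_mul_sub_mul {A : Matrix n n ℝ} (hA : A.IsSymm) (X K : Matrix n n ℝ) :
    frobeniusForm X (K * A - A * K) = frobeniusForm (X * A - A * X) K := by
  simp only [frobeniusForm_apply, transpose_sub, transpose_mul, hA.eq, Matrix.mul_sub,
    Matrix.sub_mul, trace_sub, Matrix.mul_assoc]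
  rw [trace_mul_comm X (Kᵀ * A), Matrix.mul_assoc, trace_mul_comm Kᵀ, Matrix.mul_assoc]

theorem frobeniusForm_restrict_nondegenerate (W : Submodule ℝ (Matrix n n ℝ)) :
    (frobeniusForm.restrict W).Nondegenerate := by
  refine (LinearMap.IsRefl.nondegenerate_iff_separatingLeft ?_).2 fun X hX => ?_
  · intro X Y h
    simpa [frobeniusForm_apply, ← trace_transpose (X.1 * _)] using h
  · exact Subtype.ext (frobeniusForm_self_eq_zero_iff.1 (hX X))

theorem frobeniusForm_nonEdgeProj [DecidableEq n] {H : SimpleGraph n} [DecidableRel H.Adj]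
    {X : Matrix n n ℝ} (hX : X ∈ symmOnNonEdges H) (Y : Matrix n n ℝ) :
    frobeniusForm X (nonEdgeProj H Y) = frobeniusForm X Y := by
  have hXY : frobeniusForm X Yᵀ = frobeniusForm X Y := by
    rw [← frobeniusForm_transpose, hX.1.eq]
  simp only [nonEdgeProj, LinearMap.coe_mk, AddHom.coe_mk, map_smul, frobeniusForm_hadamard,
    adjMatrix_compl_hadamard_of_mem hX, map_add, hXY, smul_eq_mul]
  ring

end Frobenius

section SSP

variable {n : Type*} [Fintype n]

theorem HasSSPwrt.eq_zero {H : SimpleGraph n} {A : Matrix n n ℝ} (h : HasSSPwrt H A)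
    {X : Matrix n n ℝ} (hX : X ∈ symmOnNonEdges H) (hAX : Commute A X) : X = 0 :=
  h X hX.1 hX.2.1 hX.2.2 hAX

theorem HasSSPwrt.mono {H H' : SimpleGraph n} {A : Matrix n n ℝ} (h : HasSSPwrt H A)
    (hHH' : H ≤ H') : HasSSPwrt H' A :=
  fun X hXs hXH' hXd hAX => h X hXs (fun i j hij => hXH' i j (hHH' hij)) hXd hAX

def skewBracket (A : Matrix n n ℝ) : Matrix n n ℝ →ₗ[ℝ] Matrix n n ℝ where
  toFun M := (M - Mᵀ) * A - A * (M - Mᵀ)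
  map_add' M M' := by simp only [transpose_add]; noncomm_ring
  map_smul' c M := by
    simp only [transpose_smul, ← smul_sub, Matrix.smul_mul, Matrix.mul_smul, RingHom.id_apply]

theorem skewBracket_apply (A M : Matrix n n ℝ) :
    skewBracket A M = (M - Mᵀ) * A - A * (M - Mᵀ) := rfl

theorem commute_of_forall_frobeniusForm_skewBracket_eq_zero {A X : Matrix n n ℝ}
    (hA : A.IsSymm) (hX : X.IsSymm) (h : ∀ M, frobeniusForm X (skewBracket A M) = 0) :
    Commute A X := by
  set D := X * A - A * X
  have hD : Dᵀ = -D := by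
    simp only [D, transpose_sub, transpose_mul, hA.eq, hX.eq, neg_sub]
  -- `D` is skew, so testing against `M = D` gives `2 * frobeniusForm D D = 0`.
  have hDD : frobeniusForm D D = 0 := by
    have := h D
    rw [skewBracket_apply, frobeniusForm_mul_sub_mul hA, hD, sub_neg_eq_add, map_add] at this
    linarith
  exact (sub_eq_zero.1 (frobeniusForm_self_eq_zero_iff.1 hDD)).symm

theorem HasSSPwrt.surjective_nonEdgeProj_comp_skewBracket [DecidableEq n] {H : SimpleGraph n}
    [DecidableRel H.Adj] {A : Matrix n n ℝ} (hssp : HasSSPwrt H A) (hA : A.IsSymm) :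
    Function.Surjective (nonEdgeProj H ∘ₗ skewBracket A) := by
  let B := frobeniusForm.restrict (symmOnNonEdges H)
  have hB := frobeniusForm_restrict_nondegenerate (symmOnNonEdges H)
  rw [← LinearMap.dualMap_injective_iff, injective_iff_map_eq_zero]
  intro φ hφ
  set X := (B.toDual hB).symm φ
  have hXφ : ∀ Y, B X Y = φ Y := LinearMap.BilinForm.apply_toDual_symm_apply φ
  have hX0 : (X : Matrix n n ℝ) = 0 := by
    refine hssp.eq_zero X.2
      (commute_of_forall_frobeniusForm_skewBracket_eq_zero hA X.2.1 fun M => ?_)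
    rw [← frobeniusForm_nonEdgeProj X.2]
    exact (hXφ _).trans (LinearMap.congr_fun hφ M)
  ext Y
  rw [← hXφ, show X = 0 from Subtype.ext hX0, map_zero]

variable [DecidableEq n]

def commutatorOn (W : Submodule ℝ (Matrix n n ℝ)) (A : Matrix n n ℝ) :
    W →ₗ[ℝ] Matrix n n ℝ :=
  (LinearMap.mul ℝ (Matrix n n ℝ) A - (LinearMap.mul ℝ (Matrix n n ℝ)).flip A) ∘ₗ W.subtype

theorem hasSSPwrt_iff_injective {H : SimpleGraph n} {A : Matrix n n ℝ} :
    HasSSPwrt H A ↔ Function.Injective (commutatorOn (symmOnNonEdges H) A) := by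
  rw [injective_iff_map_eq_zero]
  constructor
  · intro h X hX
    exact Subtype.ext (h.eq_zero X.2 (sub_eq_zero.1 hX))
  · intro h X hXs hXH hXd hAX
    exact congrArg Subtype.val (h ⟨X, hXs, hXH, hXd⟩ (sub_eq_zero.2 hAX))

attribute [local instance] Matrix.normedSpace in
theorem isOpen_setOf_hasSSPwrt (H : SimpleGraph n) :
    IsOpen {A : Matrix n n ℝ | HasSSPwrt H A} := by
  let b := Module.finBasis ℝ (symmOnNonEdges H)
  have hiff : ∀ A, HasSSPwrt H A ↔ LinearIndependent ℝ (commutatorOn _ A ∘ b) := by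
    intro A
    rw [hasSSPwrt_iff_injective]
    refine ⟨fun h => b.linearIndependent.map' _ (LinearMap.ker_eq_bot.2 h), fun h => ?_⟩
    simpa only [Function.comp_def, b.constr_self] using
      b.injective_constr_of_linearIndependent (R₂ := ℝ) h
  have hcont : Continuous fun A : Matrix n n ℝ => commutatorOn (symmOnNonEdges H) A ∘ b :=
    continuous_pi fun i => show Continuous fun A => A * (b i : Matrix n n ℝ) - b i * A by fun_prop
  have hset : {A | HasSSPwrt H A} = _ ⁻¹' {f | LinearIndependent ℝ f} := Set.ext hiff
  exact hset ▸ isOpen_setOfPred_linearIndependent.preimage hcont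

end SSP

theorem hasStrictFDerivAt_exp_mul_mul_exp_neg {𝕂 𝔸 : Type*} [RCLike 𝕂] [NormedRing 𝔸]
    [NormedAlgebra 𝕂 𝔸] [CompleteSpace 𝔸] (a : 𝔸) :
    HasStrictFDerivAt (fun x : 𝔸 => exp x * a * exp (-x))
      ((ContinuousLinearMap.mul 𝕂 𝔸).flip a - ContinuousLinearMap.mul 𝕂 𝔸 a) 0 := by
  have hexp : HasStrictFDerivAt (exp : 𝔸 → 𝔸) (1 : 𝔸 →L[𝕂] 𝔸) 0 := hasStrictFDerivAt_exp_zero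
  have hexp_neg : HasStrictFDerivAt (fun x : 𝔸 => exp (-x)) (-1 : 𝔸 →L[𝕂] 𝔸) 0 := by
    have hexp' : HasStrictFDerivAt (exp : 𝔸 → 𝔸) (1 : 𝔸 →L[𝕂] 𝔸) (-0) := by rwa [neg_zero]
    simpa using hexp'.comp (0 : 𝔸) (hasStrictFDerivAt_id (0 : 𝔸)).neg
  refine ((hexp.mul_const' a).mul' hexp_neg).congr_fderiv ?_
  ext x
  simp [neg_add_eq_sub]

section Conjugation

variable {n : Type*} [Fintype n] [DecidableEq n]

theorem isSymm_exp_mul_mul_exp_neg {K A : Matrix n n ℝ} (hK : Kᵀ = -K) (hA : A.IsSymm) :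
    (exp K * A * exp (-K)).IsSymm := by
  rw [IsSymm, transpose_mul, transpose_mul, ← exp_transpose, ← exp_transpose, transpose_neg, hK,
    neg_neg, hA.eq, Matrix.mul_assoc]

theorem charpoly_exp_mul_mul_exp_neg (K A : Matrix n n ℝ) :
    (exp K * A * exp (-K)).charpoly = A.charpoly := by
  rw [Matrix.exp_neg]
  exact charpoly_units_conj (isUnit_exp K).unit A

section

-- `exp` is differentiated for a submultiplicative norm; every norm here induces the same topology.
attribute [local instance] Matrix.linftyOpNormedAddCommGroup Matrix.linftyOpNormedSpace
  Matrix.linftyOpNormedRing Matrix.linftyOpNormedAlgebra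

theorem hasStrictFDerivAt_exp_skew_mul_mul_exp_neg (A : Matrix n n ℝ) :
    HasStrictFDerivAt (fun M : Matrix n n ℝ => exp (M - Mᵀ) * A * exp (-(M - Mᵀ)))
      (LinearMap.toContinuousLinearMap (skewBracket A)) 0 := by
  let skew : Matrix n n ℝ →L[ℝ] Matrix n n ℝ :=
    LinearMap.toContinuousLinearMap (LinearMap.id - (transposeLinearEquiv n n ℝ ℝ).toLinearMap)
  have hconj := hasStrictFDerivAt_exp_mul_mul_exp_neg (𝕂 := ℝ) A
  rw [← map_zero skew] at hconj
  refine (hconj.comp (0 : Matrix n n ℝ) skew.hasStrictFDerivAt).congr_fderiv ?_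
  ext M : 1
  rfl

end

attribute [local instance] Matrix.normedSpace in
theorem HasSSPwrt.eventually_exists_isSymm_charpoly_eq {H : SimpleGraph n} [DecidableRel H.Adj]
    {A : Matrix n n ℝ} (hssp : HasSSPwrt H A) (hA : A.IsSymm) {U : Set (Matrix n n ℝ)}
    (hU : U ∈ 𝓝 A) :
    ∀ᶠ N in 𝓝 (nonEdgeProj H A),
      ∃ A' ∈ U, A'.IsSymm ∧ A'.charpoly = A.charpoly ∧ nonEdgeProj H A' = N := by
  set f : Matrix n n ℝ → Matrix n n ℝ := fun M => exp (M - Mᵀ) * A * exp (-(M - Mᵀ))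
  have hf : HasStrictFDerivAt f _ 0 := hasStrictFDerivAt_exp_skew_mul_mul_exp_neg A
  have hf0 : f 0 = A := by simp [f]
  have hmap : map (nonEdgeProj H ∘ f) (𝓝 0) = 𝓝 (nonEdgeProj H A) := by
    rw [← hf0]
    refine ((LinearMap.toContinuousLinearMap (nonEdgeProj H)).hasStrictFDerivAt.comp 0
      hf).map_nhds_eq_of_surj ?_
    exact LinearMap.range_eq_top.2 (hssp.surjective_nonEdgeProj_comp_skewBracket hA)
  have hfU : f ⁻¹' U ∈ 𝓝 0 := hf.continuousAt.preimage_mem_nhds (hf0 ▸ hU)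
  rw [← hmap, Filter.eventually_map]
  filter_upwards [hfU] with M hM
  have hskew : (M - Mᵀ)ᵀ = -(M - Mᵀ) := by rw [transpose_sub, transpose_transpose, neg_sub]
  exact ⟨f M, hM, isSymm_exp_mul_mul_exp_neg hskew hA, charpoly_exp_mul_mul_exp_neg _ A, rfl⟩

end Conjugation

/-- Theorem thm:perturb: if `E(G) ⊆ E(H) ⊆ E(H')` and `A ∈ S(G)` has
the SSP with respect to `H`, then for each `ε > 0` there is `A' ∈ S^cl(H')` with the same
spectrum, `‖A - A'‖ < ε`, the SSP with respect to `H'`, and all entries on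
`E(H') \ E(H)` nonzero. -/
theorem stmt10 {V : Type*} [Fintype V] [DecidableEq V]
    (G H H' : SimpleGraph V) (hGH : G ≤ H) (hHH' : H ≤ H')
    (A : Matrix V V ℝ) (hA : inS G A) (hssp : HasSSPwrt H A)
    (ε : ℝ) (hε : 0 < ε) :
    ∃ A' : Matrix V V ℝ,
      inScl H' A' ∧ specM A' = specM A ∧ ‖A - A'‖ < ε ∧ HasSSPwrt H' A' ∧
      ∀ i j, H'.Adj i j → ¬ H.Adj i j → A' i j ≠ 0 := by
  classical
  have hU : Metric.ball A ε ∩ {B | HasSSPwrt H' B} ∈ 𝓝 A :=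
    inter_mem (Metric.ball_mem_nhds A hε) ((isOpen_setOf_hasSSPwrt H').mem_nhds (hssp.mono hHH'))
  let N : symmOnNonEdges H := ⟨(H' \ H).adjMatrix ℝ,
    adjMatrix_mem_symmOnNonEdges (le_compl_iff_disjoint_right.2 disjoint_sdiff_self_left)⟩
  have hN : Tendsto (fun c : ℝ => c • N) (𝓝[≠] 0) (𝓝 (nonEdgeProj H A)) := by
    rw [nonEdgeProj_eq_zero_of_inScl (hA.inScl_of_le hGH), ← zero_smul ℝ N]
    exact (tendsto_id.smul_const N).mono_left nhdsWithin_le_nhds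
  obtain ⟨c, ⟨A', ⟨hA'ε, hA'ssp⟩, hA'symm, hA'charpoly, hA'N⟩, hc⟩ :=
    ((hN.eventually (hssp.eventually_exists_isSymm_charpoly_eq hA.1 hU)).and
      self_mem_nhdsWithin).exists
  have hentry : ∀ i j, i ≠ j → ¬ H.Adj i j → A' i j = if H'.Adj i j then c else 0 := by
    intro i j hij hH
    rw [← nonEdgeProj_apply_of_isSymm hA'symm ⟨hij, hH⟩, hA'N]
    simp [N, hH]
  refine ⟨A', ⟨hA'symm, fun i j hij hA'ij => ?_⟩, congrArg Polynomial.roots hA'charpoly, ?_,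
    hA'ssp, fun i j hH' hH => ?_⟩
  · by_contra hH'
    exact hA'ij (by rw [hentry i j hij fun hH => hH' (hHH' hH), if_neg hH'])
  · rwa [← dist_eq_norm, dist_comm]
  · rw [hentry i j (H'.ne_of_adj hH') hH, if_pos hH']
    exact hc
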